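/- With the notation above, for all a > 0: 0 ≤ 1 − ω_a·ω'_a ≤ 4a² (1 + tan²(θ/2))(1 + tan²(θ'/2)). -/

import Mathlib

open Real Set

lemma sin_two_arctan' (x : ℝ) : Real.sin (2 * Real.arctan x) = 2 * x / (1 + x ^ 2) := by
  rw [Real.sin_two_mul, Real.sin_arctan, Real.cos_arctan]
  have h : (0:ℝ) < 1 + x ^ 2 := by positivity
  have hs : Real.sqrt (1 + x ^ 2) ≠ 0 := by positivity
  field_simp
  rw [Real.sq_sqrt h.le]

lemma cos_two_arctan' (x : ℝ) : Real.cos (2 * Real.arctan x) = (1 - x ^ 2) / (1 + x ^ 2) := by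
  rw [Real.cos_two_mul, Real.cos_arctan]
  have h : (0:ℝ) < 1 + x ^ 2 := by positivity
  rw [div_pow, Real.sq_sqrt h.le]
  field_simp
  ring

lemma aux3 (a t t' : ℝ) :
    4 * ((a * t) ^ 2 + (a * t') ^ 2) ≤ 4 * a ^ 2 * (1 + t ^ 2) * (1 + t' ^ 2) := by
  nlinarith [sq_nonneg (a * t * t'), sq_nonneg a]

/-- For `θ, θ' ∈ [0,π)`, `φ, φ' ∈ [0,2π)` and `a > 0`, with `θ_a = 2 arctan(a tan(θ/2))`
and `ω_a·ω'_a = sin θ_a sin θ'_a cos(φ−φ') + cos θ_a cos θ'_a`: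
`0 ≤ 1 − ω_a·ω'_a ≤ 4a²(1 + tan²(θ/2))(1 + tan²(θ'/2))`. -/
theorem stmt5 (a θ θ' φ φ' : ℝ) (ha : 0 < a)
    (hθ : θ ∈ Set.Ico 0 Real.pi) (hθ' : θ' ∈ Set.Ico 0 Real.pi)
    (hφ : φ ∈ Set.Ico 0 (2 * Real.pi)) (hφ' : φ' ∈ Set.Ico 0 (2 * Real.pi)) :
    0 ≤ 1 - (Real.sin (2 * Real.arctan (a * Real.tan (θ / 2)))
          * Real.sin (2 * Real.arctan (a * Real.tan (θ' / 2))) * Real.cos (φ - φ')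
        + Real.cos (2 * Real.arctan (a * Real.tan (θ / 2)))
          * Real.cos (2 * Real.arctan (a * Real.tan (θ' / 2)))) ∧
    1 - (Real.sin (2 * Real.arctan (a * Real.tan (θ / 2)))
          * Real.sin (2 * Real.arctan (a * Real.tan (θ' / 2))) * Real.cos (φ - φ')
        + Real.cos (2 * Real.arctan (a * Real.tan (θ / 2)))
          * Real.cos (2 * Real.arctan (a * Real.tan (θ' / 2))))
      ≤ 4 * a ^ 2 * (1 + Real.tan (θ / 2) ^ 2) * (1 + Real.tan (θ' / 2) ^ 2) := by
  set t := Real.tan (θ / 2)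
  set t' := Real.tan (θ' / 2)
  set x := a * t with hx
  set y := a * t' with hy
  set c := Real.cos (φ - φ') with hc
  have hc1 : c ≤ 1 := Real.cos_le_one _
  have hc2 : -1 ≤ c := Real.neg_one_le_cos _
  have hdx : (0:ℝ) < 1 + x ^ 2 := by positivity
  have hdy : (0:ℝ) < 1 + y ^ 2 := by positivity
  rw [sin_two_arctan', sin_two_arctan', cos_two_arctan', cos_two_arctan']
  have key : 1 - (2 * x / (1 + x ^ 2) * (2 * y / (1 + y ^ 2)) * c
      + (1 - x ^ 2) / (1 + x ^ 2) * ((1 - y ^ 2) / (1 + y ^ 2)))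
      = 2 * (x ^ 2 + y ^ 2 - 2 * x * y * c) / ((1 + x ^ 2) * (1 + y ^ 2)) := by
    field_simp
    ring
  rw [key]
  have hN : 0 ≤ x ^ 2 + y ^ 2 - 2 * x * y * c := by
    nlinarith [mul_nonneg (sub_nonneg.2 hc1) (sq_nonneg (x + y)),
      mul_nonneg (by linarith : (0:ℝ) ≤ 1 + c) (sq_nonneg (x - y))]
  constructor
  · positivity
  · have hD1 : (1:ℝ) ≤ (1 + x ^ 2) * (1 + y ^ 2) := by nlinarith [sq_nonneg x, sq_nonneg y]
    have h1 : 2 * (x ^ 2 + y ^ 2 - 2 * x * y * c) / ((1 + x ^ 2) * (1 + y ^ 2))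
        ≤ 2 * (x ^ 2 + y ^ 2 - 2 * x * y * c) := by
      apply div_le_self (by linarith) hD1
    have h2 : 2 * (x ^ 2 + y ^ 2 - 2 * x * y * c) ≤ 4 * (x ^ 2 + y ^ 2) := by
      nlinarith [mul_nonneg (sub_nonneg.2 hc1) (sq_nonneg (x - y)),
        mul_nonneg (by linarith : (0:ℝ) ≤ 1 + c) (sq_nonneg (x + y))]
    have h3 : 4 * (x ^ 2 + y ^ 2) ≤ 4 * a ^ 2 * (1 + t ^ 2) * (1 + t' ^ 2) := by
      rw [hx, hy]; exact aux3 a t t'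
    linarith
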